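/- arXiv:1706.01578 — 4 statements merged into one kernel-verified Lean document; each statement's English description precedes it below -/
import Mathlib

section
/- Normalization of the transition density p: for every t > 0 and every x ≥ 0, ∫_0^∞ p_t(x,y) dy = 1. -/
open MeasureTheory Real Finset

/-- Transition density `p_t(x,y)` of the auxiliary Markov process `X`. -/
noncomputable def transP (t x y : ℝ) : ℝ :=
  2 * t * Real.sqrt y / (Real.pi * ((y - x) ^ 2 + 2 * (x + y) * t ^ 2 + t ^ 4))

/-- The function `ℓ_t(y)`. -/
noncomputable def ellF (t y : ℝ) : ℝ :=
  if 0 < y then y * Real.exp (-(y ^ 2) / (2 * t)) / Real.sqrt (2 * Real.pi * t ^ 3) else 0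

/-- The function `g_t(y₁,y₂)`. -/
noncomputable def gF (t y₁ y₂ : ℝ) : ℝ :=
  if 0 < y₁ ∧ 0 < y₂ then
    (1 / Real.sqrt (2 * Real.pi * t)) *
      (Real.exp (-((y₁ - y₂) ^ 2) / (2 * t)) - Real.exp (-((y₁ + y₂) ^ 2) / (2 * t)))
  else 0

/-- The joint density `f_{t₁,…,t_{n+1}}(y₁,…,y_{n+1})` of the Brownian excursion
at `n+1` time points (indexed by `Fin (n+1)`). -/
noncomputable def excDensity (n : ℕ) (t y : Fin (n + 1) → ℝ) : ℝ :=
  Real.sqrt (8 * Real.pi) * ellF (t 0) (y 0) * ellF (1 - t (Fin.last n)) (y (Fin.last n)) *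
    ∏ k : Fin n, gF (t k.succ - t k.castSucc) (y k.castSucc) (y k.succ)

/-!
Substituting `y = s²` turns `p_t(a², y) dy` into the rational density
`4ts² / (π((s-a)² + t²)((s+a)² + t²)) ds`, because the quartic denominator of `p_t` factors.
The partial fraction decomposition `s² / (AB) = (s / 4a)(1/A - 1/B)` then gives an explicit odd
primitive, made of `log((s ∓ a)² + t²)` and `arctan((s ± a)/t)`, which vanishes at `0` and tends
to `1` at infinity. For `a = 0` the primitive is its limit `(2/π)(arctan(s/t) - ts/(s² + t²))`.
-/

open Filter Topology Set

theorem integral_smul_comp_sq_Ioi {E : Type*} [NormedAddCommGroup E] [NormedSpace ℝ E]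
    (g : ℝ → E) : ∫ s in Ioi 0, (2 * s) • g (s ^ 2) = ∫ y in Ioi 0, g y := by
  rw [← integral_comp_rpow_Ioi g two_ne_zero]
  refine setIntegral_congr_fun measurableSet_Ioi fun s _ => ?_
  norm_num [abs_two, rpow_two]

theorem tendsto_atTop_of_eq_comp_inv {f g : ℝ → ℝ} (hg : ContinuousAt g 0)
    (hfg : ∀ s > 0, f s = g s⁻¹) : Tendsto f atTop (𝓝 (g 0)) :=
  (hg.tendsto.comp tendsto_inv_atTop_zero).congr'
    ((eventually_gt_atTop 0).mono fun s hs => (hfg s hs).symm)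

theorem tendsto_arctan_sub_div_atTop {t : ℝ} (ht : 0 < t) (c : ℝ) :
    Tendsto (fun s => arctan ((s - c) / t)) atTop (𝓝 (π / 2)) :=
  (tendsto_nhds_of_tendsto_nhdsWithin tendsto_arctan_atTop).comp <|
    (tendsto_atTop_add_const_right _ (-c) tendsto_id).atTop_div_const ht

theorem tendsto_log_sub_log_atTop {t : ℝ} (ht : t ≠ 0) (a : ℝ) :
    Tendsto (fun s => log ((s - a) ^ 2 + t ^ 2) - log ((s + a) ^ 2 + t ^ 2)) atTop (𝓝 0) := by
  let g u := log (((1 - a * u) ^ 2 + (t * u) ^ 2) / ((1 + a * u) ^ 2 + (t * u) ^ 2))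
  have hg : ContinuousAt g 0 := by fun_prop (disch := norm_num)
  simpa [g] using tendsto_atTop_of_eq_comp_inv hg fun s hs => by
    rw [← log_div (by positivity) (by positivity)]
    congr 1
    field_simp

noncomputable def transPSq (t a s : ℝ) : ℝ :=
  4 * t * s ^ 2 / (π * (((s - a) ^ 2 + t ^ 2) * ((s + a) ^ 2 + t ^ 2)))

theorem two_mul_mul_transP_sq (t a : ℝ) {s : ℝ} (hs : 0 ≤ s) :
    2 * s * transP t (a ^ 2) (s ^ 2) = transPSq t a s := by
  rw [transP, transPSq, sqrt_sq hs]
  ring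

theorem transPSq_nonneg {t : ℝ} (ht : 0 ≤ t) (a s : ℝ) : 0 ≤ transPSq t a s := by
  unfold transPSq
  positivity

noncomputable def transPSqPrimitive (t a s : ℝ) : ℝ :=
  t / (2 * π * a) * (log ((s - a) ^ 2 + t ^ 2) - log ((s + a) ^ 2 + t ^ 2)) +
    (arctan ((s - a) / t) + arctan ((s + a) / t)) / π

noncomputable def transPSqPrimitiveFromZero (t s : ℝ) : ℝ :=
  2 / π * (arctan (s / t) - t * s / (s ^ 2 + t ^ 2))

theorem hasDerivAt_transPSqPrimitive {t a : ℝ} (ht : t ≠ 0) (ha : a ≠ 0) (s : ℝ) :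
    HasDerivAt (transPSqPrimitive t a) (transPSq t a s) s := by
  have hA : (s - a) ^ 2 + t ^ 2 ≠ 0 := by positivity
  have hB : (s + a) ^ 2 + t ^ 2 ≠ 0 := by positivity
  have hlog := (((((hasDerivAt_id s).sub_const a).pow 2).add_const (t ^ 2)).log hA).sub
    (((((hasDerivAt_id s).add_const a).pow 2).add_const (t ^ 2)).log hB)
  have harctan := (((hasDerivAt_id s).sub_const a).div_const t).arctan.add
    (((hasDerivAt_id s).add_const a).div_const t).arctan
  refine ((hlog.const_mul (t / (2 * π * a))).add (harctan.div_const π)).congr_deriv ?_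
  simp only [id, Pi.pow_apply, transPSq]
  field_simp
  ring

theorem hasDerivAt_transPSqPrimitiveFromZero {t : ℝ} (ht : t ≠ 0) (s : ℝ) :
    HasDerivAt (transPSqPrimitiveFromZero t) (transPSq t 0 s) s := by
  have hB : s ^ 2 + t ^ 2 ≠ 0 := by positivity
  have := (((hasDerivAt_id s).div_const t).arctan.sub
    (((hasDerivAt_id s).const_mul t).div ((hasDerivAt_pow 2 s).add_const (t ^ 2)) hB)).const_mul
    (2 / π)
  refine this.congr_deriv ?_
  simp only [id, transPSq]
  field_simp
  ring

theorem transPSqPrimitive_zero (t a : ℝ) : transPSqPrimitive t a 0 = 0 := by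
  simp [transPSqPrimitive, neg_div, arctan_neg]

theorem transPSqPrimitiveFromZero_zero (t : ℝ) : transPSqPrimitiveFromZero t 0 = 0 := by
  simp [transPSqPrimitiveFromZero]

theorem tendsto_transPSqPrimitive {t : ℝ} (ht : 0 < t) (a : ℝ) :
    Tendsto (transPSqPrimitive t a) atTop (𝓝 1) := by
  have := ((tendsto_log_sub_log_atTop ht.ne' a).const_mul (t / (2 * π * a))).add
    (((tendsto_arctan_sub_div_atTop ht a).add (tendsto_arctan_sub_div_atTop ht (-a))).div_const π)
  convert this using 2
  · simp [transPSqPrimitive]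
  · field_simp; ring

theorem tendsto_transPSqPrimitiveFromZero {t : ℝ} (ht : 0 < t) :
    Tendsto (transPSqPrimitiveFromZero t) atTop (𝓝 1) := by
  have hrat := tendsto_atTop_of_eq_comp_inv (f := fun s => t * s / (s ^ 2 + t ^ 2))
    (g := fun u => t * u / (1 + t ^ 2 * u ^ 2)) (by fun_prop (disch := positivity))
    fun s hs => by field_simp
  simp only [mul_zero, zero_div] at hrat
  have := ((tendsto_arctan_sub_div_atTop ht 0).sub hrat).const_mul (2 / π)
  convert this using 2
  · simp [transPSqPrimitiveFromZero]
  · field_simp; ring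

theorem integral_transPSq {t : ℝ} (ht : 0 < t) (a : ℝ) : ∫ s in Ioi 0, transPSq t a s = 1 := by
  rcases eq_or_ne a 0 with rfl | ha
  · rw [integral_Ioi_of_hasDerivAt_of_nonneg'
      (fun s _ => hasDerivAt_transPSqPrimitiveFromZero ht.ne' s) (fun s _ => transPSq_nonneg ht.le _ s)
      (tendsto_transPSqPrimitiveFromZero ht), transPSqPrimitiveFromZero_zero, sub_zero]
  · rw [integral_Ioi_of_hasDerivAt_of_nonneg'
      (fun s _ => hasDerivAt_transPSqPrimitive ht.ne' ha s) (fun s _ => transPSq_nonneg ht.le a s)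
      (tendsto_transPSqPrimitive ht a), transPSqPrimitive_zero, sub_zero]

/-- **Normalization of the transition density `p`:** for `t > 0` and `x ≥ 0`,
`∫_0^∞ p_t(x,y) dy = 1`. -/
theorem transP_integral_eq_one (t x : ℝ) (ht : 0 < t) (hx : 0 ≤ x) :
    ∫ y in Set.Ioi (0 : ℝ), transP t x y = 1 := by
  rw [← integral_smul_comp_sq_Ioi, ← sq_sqrt hx]
  rw [setIntegral_congr_fun measurableSet_Ioi fun s (hs : 0 < s) =>
    (smul_eq_mul _ _).trans (two_mul_mul_transP_sq t √x hs.le)]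
  exact integral_transPSq ht √x
end

section
/- Stationarity of the σ-finite measure √x dx for the transition density p: for every s > 0 and every y > 0, ∫_0^∞ √x · p_s(x,y) dx = √y. -/
open MeasureTheory Real Finset

/-! With `u = √x`, `v = √y` the denominator of `p_s(x, y)` factors as
`((u - v)² + s²) ((u + v)² + s²)`, so `x ↦ √x p_s(x, y)` has an elementary primitive in `√x`
(a logarithm plus two arctangents). It vanishes at `x = 0` and tends to `v` as `x → ∞`, since the
logarithmic term tends to `0` and each arctangent to `π / 2`. -/

open Filter Topology

theorem transP_eq_of_nonneg (t : ℝ) {x y : ℝ} (hx : 0 ≤ x) (hy : 0 ≤ y) :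
    transP t x y = 2 * t * √y / (π * (((√x - √y) ^ 2 + t ^ 2) * ((√x + √y) ^ 2 + t ^ 2))) := by
  obtain ⟨a, ha, rfl⟩ : ∃ a, 0 ≤ a ∧ x = a ^ 2 := ⟨√x, sqrt_nonneg x, (sq_sqrt hx).symm⟩
  obtain ⟨b, hb, rfl⟩ : ∃ b, 0 ≤ b ∧ y = b ^ 2 := ⟨√y, sqrt_nonneg y, (sq_sqrt hy).symm⟩
  rw [transP, sqrt_sq ha, sqrt_sq hb]
  ring_nf

theorem transP_nonneg {t x y : ℝ} (ht : 0 ≤ t) (hx : 0 ≤ x) (hy : 0 ≤ y) : 0 ≤ transP t x y := by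
  rw [transP_eq_of_nonneg t hx hy]
  positivity

/-- Integrates the partial fractions `4uv / (AB) = 1/A - 1/B`, where `A = (u - v)² + s²` and
`B = (u + v)² + s²`. -/
noncomputable def transPPrimitive (s v u : ℝ) : ℝ :=
  s / (2 * π) * log (((u - v) ^ 2 + s ^ 2) / ((u + v) ^ 2 + s ^ 2)) +
    v / π * (arctan ((u - v) / s) + arctan ((u + v) / s))

theorem transPPrimitive_zero (s v : ℝ) : transPPrimitive s v 0 = 0 := by
  rw [transPPrimitive]
  rcases eq_or_ne (v ^ 2 + s ^ 2) 0 with h | h <;> simp [h, neg_div, arctan_neg]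

theorem continuous_transPPrimitive {s : ℝ} (hs : s ≠ 0) (v : ℝ) :
    Continuous (transPPrimitive s v) := by
  have hA (u : ℝ) : (u - v) ^ 2 + s ^ 2 ≠ 0 := by positivity
  have hB (u : ℝ) : (u + v) ^ 2 + s ^ 2 ≠ 0 := by positivity
  unfold transPPrimitive
  fun_prop (disch := first | exact hB | exact fun u => div_ne_zero (hA u) (hB u))

theorem hasDerivAt_transPPrimitive {s : ℝ} (hs : s ≠ 0) (v u : ℝ) :
    HasDerivAt (transPPrimitive s v)
      (4 * s * v * u ^ 2 / (π * (((u - v) ^ 2 + s ^ 2) * ((u + v) ^ 2 + s ^ 2)))) u := by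
  have hB : 0 < (u + v) ^ 2 + s ^ 2 := by positivity
  have hsq (c : ℝ) : HasDerivAt (fun u => (u + c) ^ 2 + s ^ 2) (2 * (u + c)) u := by
    simpa using (((hasDerivAt_id' u).add_const c).pow 2).add_const (s ^ 2)
  have hlin (c : ℝ) :
      HasDerivAt (fun u => arctan ((u + c) / s)) (1 / (1 + ((u + c) / s) ^ 2) * (1 / s)) u := by
    simpa using (((hasDerivAt_id' u).add_const c).div_const s).arctan
  have hlog := ((hsq (-v)).fun_div (hsq v) hB.ne').log (by rw [← sub_eq_add_neg]; positivity)
  have harctan := (hlin (-v)).fun_add (hlin v)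
  simp only [← sub_eq_add_neg] at hlog harctan
  refine ((hlog.const_mul (s / (2 * π))).add (harctan.const_mul (v / π))).congr_deriv ?_
  field_simp
  ring

theorem tendsto_sq_add_div_sq_add_atTop (a b c d : ℝ) :
    Tendsto (fun u => ((u + a) ^ 2 + c) / ((u + b) ^ 2 + d)) atTop (𝓝 1) := by
  have hcont : ContinuousAt
      (fun w => ((1 + a * w) ^ 2 + c * w ^ 2) / ((1 + b * w) ^ 2 + d * w ^ 2)) 0 := by
    fun_prop (disch := norm_num)
  have hlim := hcont.tendsto.comp tendsto_inv_atTop_zero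
  norm_num at hlim
  refine hlim.congr' ?_
  filter_upwards [eventually_gt_atTop 0] with u hu
  simp only [Function.comp_apply]
  field_simp

theorem tendsto_transPPrimitive_atTop {s : ℝ} (hs : 0 < s) (v : ℝ) :
    Tendsto (transPPrimitive s v) atTop (𝓝 v) := by
  have hlog :
      Tendsto (fun u => log (((u - v) ^ 2 + s ^ 2) / ((u + v) ^ 2 + s ^ 2))) atTop (𝓝 0) := by
    have := (continuousAt_log one_ne_zero).tendsto.comp
      (tendsto_sq_add_div_sq_add_atTop (-v) v (s ^ 2) (s ^ 2))
    simp only [← sub_eq_add_neg, log_one] at this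
    exact this
  have harctan (c : ℝ) : Tendsto (fun u => arctan ((u + c) / s)) atTop (𝓝 (π / 2)) :=
    (tendsto_arctan_atTop.mono_right nhdsWithin_le_nhds).comp
      ((tendsto_atTop_add_const_right _ c tendsto_id).atTop_div_const hs)
  have hlim := (hlog.const_mul (s / (2 * π))).add
    (((harctan (-v)).add (harctan v)).const_mul (v / π))
  simp only [← sub_eq_add_neg] at hlim
  rwa [show s / (2 * π) * 0 + v / π * (π / 2 + π / 2) = v by field_simp; ring] at hlim

theorem hasDerivAt_transPPrimitive_sqrt {s x y : ℝ} (hs : s ≠ 0) (hx : 0 < x) (hy : 0 ≤ y) :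
    HasDerivAt (fun x => transPPrimitive s √y √x) (√x * transP s x y) x := by
  have hsqrt : 0 < √x := sqrt_pos.mpr hx
  refine ((hasDerivAt_transPPrimitive hs √y √x).comp x (hasDerivAt_sqrt hx.ne')).congr_deriv ?_
  rw [transP_eq_of_nonneg s hx.le hy]
  field_simp
  ring

/-- **Stationarity of the σ-finite measure `√x dx`** for the transition density `p`:
for `s > 0` and `y > 0`, `∫_0^∞ √x · p_s(x,y) dx = √y`. -/
theorem transP_stationary (s y : ℝ) (hs : 0 < s) (hy : 0 < y) :
    ∫ x in Set.Ioi (0 : ℝ), Real.sqrt x * transP s x y = Real.sqrt y := by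
  rw [integral_Ioi_of_hasDerivAt_of_nonneg
    ((continuous_transPPrimitive hs.ne' _).comp continuous_sqrt).continuousWithinAt
    (fun x hx => hasDerivAt_transPPrimitive_sqrt hs.ne' hx hy.le)
    (fun x hx => mul_nonneg (sqrt_nonneg x) (transP_nonneg hs.le (le_of_lt hx) hy.le))
    ((tendsto_transPPrimitive_atTop hs _).comp tendsto_sqrt_atTop),
    Function.comp_apply, sqrt_zero, transPPrimitive_zero, sub_zero]
end

section
/- Sine-transform representation of the transition density at squared arguments: for every s > 0, every x > 0 and every y ≥ 0, p_s(x², y²) = (1/(πx)) · ∫_0^∞ e^{−sz} · sin(xz) · sin(yz) dz. -/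
open MeasureTheory Real Finset

/-! The product-to-sum formula `2 sin(xz) sin(yz) = cos((x-y)z) - cos((x+y)z)` reduces the
integral to Laplace transforms of cosines, and `∫_0^∞ e^{-sz} cos(az) dz = Re (1/(s - ia))
= s/(s² + a²)`. What remains is the factorisation
`(y² - x²)² + 2(x² + y²)s² + s⁴ = (s² + (x-y)²)(s² + (x+y)²)` of the denominator of `p_s`. -/

lemma exp_neg_mul_mul_cos_eq_re (s a z : ℝ) :
    Real.exp (-(s * z)) * Real.cos (a * z) = (Complex.exp ((-s + a * Complex.I) * z)).re := by
  rw [Complex.exp_re]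
  simp

lemma integrableOn_exp_neg_mul_mul_cos {s : ℝ} (hs : 0 < s) (a : ℝ) :
    IntegrableOn (fun z => Real.exp (-(s * z)) * Real.cos (a * z)) (Set.Ioi 0) := by
  simp_rw [exp_neg_mul_mul_cos_eq_re]
  exact (integrableOn_exp_mul_complex_Ioi (by simpa using hs) 0).re

lemma integral_exp_neg_mul_mul_cos {s : ℝ} (hs : 0 < s) (a : ℝ) :
    ∫ z in Set.Ioi (0 : ℝ), Real.exp (-(s * z)) * Real.cos (a * z) = s / (s ^ 2 + a ^ 2) := by
  simp_rw [exp_neg_mul_mul_cos_eq_re, ← RCLike.re_to_complex]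
  rw [integral_re (integrableOn_exp_mul_complex_Ioi (by simpa using hs) 0),
    integral_exp_mul_complex_Ioi (by simpa using hs) 0, RCLike.re_to_complex]
  simp [Complex.div_re, Complex.normSq_apply, ← pow_two]

lemma integral_exp_neg_mul_mul_sin_mul_sin {s : ℝ} (hs : 0 < s) (x y : ℝ) :
    ∫ z in Set.Ioi (0 : ℝ), Real.exp (-(s * z)) * Real.sin (x * z) * Real.sin (y * z) =
      (s / (s ^ 2 + (x - y) ^ 2) - s / (s ^ 2 + (x + y) ^ 2)) / 2 := by
  have hprod : ∀ z, Real.exp (-(s * z)) * Real.sin (x * z) * Real.sin (y * z) =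
      (Real.exp (-(s * z)) * Real.cos ((x - y) * z) -
        Real.exp (-(s * z)) * Real.cos ((x + y) * z)) / 2 := fun z => by
    rw [sub_mul, add_mul, ← mul_sub, ← Real.two_mul_sin_mul_sin]
    ring
  simp_rw [hprod]
  rw [integral_div, integral_sub (integrableOn_exp_neg_mul_mul_cos hs _)
    (integrableOn_exp_neg_mul_mul_cos hs _), integral_exp_neg_mul_mul_cos hs,
    integral_exp_neg_mul_mul_cos hs]

/-- **Sine-transform representation** of the transition density at squared arguments:
for `s > 0`, `x > 0`, `y ≥ 0`,
`p_s(x², y²) = (1/(πx)) · ∫_0^∞ e^{−sz} sin(xz) sin(yz) dz`. -/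
theorem transP_sq_sine_transform (s x y : ℝ) (hs : 0 < s) (hx : 0 < x) (hy : 0 ≤ y) :
    transP s (x ^ 2) (y ^ 2) =
      (1 / (Real.pi * x)) *
        ∫ z in Set.Ioi (0 : ℝ), Real.exp (-(s * z)) * Real.sin (x * z) * Real.sin (y * z) := by
  rw [integral_exp_neg_mul_mul_sin_mul_sin hs, transP, Real.sqrt_sq hy]
  have hD : (y ^ 2 - x ^ 2) ^ 2 + 2 * (x ^ 2 + y ^ 2) * s ^ 2 + s ^ 4 =
      (s ^ 2 + (x - y) ^ 2) * (s ^ 2 + (x + y) ^ 2) := by ring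
  rw [hD]
  have : 0 < s ^ 2 + (x - y) ^ 2 := by positivity
  have : 0 < s ^ 2 + (x + y) ^ 2 := by positivity
  field_simp
  ring
end

section
/- Explicit weight for the Beta(δ/2, (3−δ)/2) mixture: for every δ ∈ (0,3) and every x > 0, (√x · e^{x/2} / √(2π)) · (1/B(δ/2, (3−δ)/2)) · ∫_0^1 e^{−x/(2v)} · v^{−3/2} · v^{δ/2 − 1} · (1−v)^{(1−δ)/2} dv = x^{δ/2 − 1} / (2^{δ/2} · Γ(δ/2)), where B(α,β) = Γ(α)Γ(β)/Γ(α+β). -/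
/-!
Substituting `v = 1 / (1 + u)` maps `(0, ∞)` onto `(0, 1)`. Because the exponents of `v` and
`1 - v` in the integrand add up to `-2`, the Jacobian `(1 + u)⁻²` cancels exactly and the integral
becomes `e^{-x/2} ∫_0^∞ u^{s-1} e^{-xu/2} du = e^{-x/2} Γ(s) (2/x)^s` with `s = (3 - δ)/2`.
Then `Γ(s)` cancels against the Beta function, and `Γ(3/2) = √π / 2` leaves the stated weight.
-/

open MeasureTheory Real Set

lemma image_inv_one_add_Ioi : (fun u : ℝ => (1 + u)⁻¹) '' Ioi 0 = Ioo 0 1 := by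
  ext v
  constructor
  · rintro ⟨u, hu, rfl⟩
    have hu : 0 < u := hu
    exact ⟨by positivity, inv_lt_one_of_one_lt₀ (by linarith)⟩
  · rintro ⟨hv0, hv1⟩
    refine ⟨v⁻¹ - 1, by simpa using one_lt_inv₀ hv0 |>.mpr hv1, by simp⟩

lemma integral_Ioo_zero_one_eq_integral_Ioi_comp_inv_one_add {E : Type*} [NormedAddCommGroup E]
    [NormedSpace ℝ E] (f : ℝ → E) :
    ∫ v in Ioo 0 1, f v = ∫ u in Ioi 0, ((1 + u) ^ 2)⁻¹ • f (1 + u)⁻¹ := by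
  have hderiv : ∀ u ∈ Ioi (0 : ℝ),
      HasDerivWithinAt (fun u : ℝ => (1 + u)⁻¹) (-((1 + u) ^ 2)⁻¹) (Ioi 0) u := fun u hu => by
    have hu : 0 < u := hu
    have h := ((hasDerivAt_id u).const_add 1).fun_inv (by simp only [id]; linarith)
    simpa [neg_div, one_div] using h.hasDerivWithinAt
  have hinj : InjOn (fun u : ℝ => (1 + u)⁻¹) (Ioi 0) := fun a _ b _ hab => by
    simpa using inv_injective hab
  rw [← image_inv_one_add_Ioi, integral_image_eq_integral_abs_deriv_smul measurableSet_Ioi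
    hderiv hinj]
  refine setIntegral_congr_fun measurableSet_Ioi fun u (hu : 0 < u) => ?_
  rw [abs_neg, abs_of_pos (by positivity)]

lemma integral_Ioo_exp_neg_div_mul_rpow_mul_one_sub_rpow {c s : ℝ} (hc : 0 < c) (hs : 0 < s) :
    ∫ v in Ioo 0 1, exp (-c / v) * v ^ (-s - 1) * (1 - v) ^ (s - 1) =
      exp (-c) * Gamma s / c ^ s := by
  have hpointwise : ∀ u ∈ Ioi (0 : ℝ),
      ((1 + u) ^ 2)⁻¹ •
          (exp (-c / (1 + u)⁻¹) * ((1 + u)⁻¹) ^ (-s - 1) * (1 - (1 + u)⁻¹) ^ (s - 1)) =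
        exp (-c) * (u ^ (s - 1) * exp (-(c * u))) := fun u hu => by
    have hu : 0 < u := hu
    have h1u : 0 < 1 + u := by linarith
    have hsub : 1 - (1 + u)⁻¹ = u / (1 + u) := by field_simp; ring
    have hpow : (1 + u) ^ (s + 1) / (1 + u) ^ (s - 1) = (1 + u) ^ 2 := by
      rw [← rpow_sub h1u, show s + 1 - (s - 1) = (2 : ℕ) by norm_num, rpow_natCast]
    rw [hsub, div_rpow hu.le h1u.le, inv_rpow h1u.le, ← rpow_neg h1u.le, neg_sub', sub_neg_eq_add,
      div_inv_eq_mul, show -c * (1 + u) = -c + -(c * u) by ring, exp_add, smul_eq_mul, ← hpow]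
    field_simp
  rw [integral_Ioo_zero_one_eq_integral_Ioi_comp_inv_one_add,
    setIntegral_congr_fun measurableSet_Ioi hpointwise,
    integral_const_mul, integral_rpow_mul_exp_neg_mul_Ioi hs hc, one_div, inv_rpow hc.le]
  ring

lemma Gamma_three_div_two : Gamma (3 / 2) = √π / 2 := by
  rw [show (3 / 2 : ℝ) = 1 / 2 + 1 by norm_num, Gamma_add_one (by norm_num), Gamma_one_half_eq]
  ring

theorem bessel_meander_weight_general (δ x : ℝ) (hδ3 : δ < 3) (hx : 0 < x) :
    (Real.sqrt x * Real.exp (x / 2) / Real.sqrt (2 * Real.pi)) *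
        (1 / (Real.Gamma (δ / 2) * Real.Gamma ((3 - δ) / 2) /
          Real.Gamma (δ / 2 + (3 - δ) / 2))) *
        ∫ v in Set.Ioo (0 : ℝ) 1,
          Real.exp (-x / (2 * v)) * v ^ (-(3 : ℝ) / 2) * v ^ (δ / 2 - 1) *
            (1 - v) ^ ((1 - δ) / 2) =
      x ^ (δ / 2 - 1) / ((2 : ℝ) ^ (δ / 2) * Real.Gamma (δ / 2)) := by
  set s := (3 - δ) / 2 with hs_def
  have hs : 0 < s := by linarith
  have hintegrand : ∀ v ∈ Ioo (0 : ℝ) 1,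
      exp (-x / (2 * v)) * v ^ (-(3 : ℝ) / 2) * v ^ (δ / 2 - 1) * (1 - v) ^ ((1 - δ) / 2) =
        exp (-(x / 2) / v) * v ^ (-s - 1) * (1 - v) ^ (s - 1) := fun v hv => by
    rw [mul_assoc (exp _), ← rpow_add hv.1, show -x / (2 * v) = -(x / 2) / v by ring,
      show -(3 : ℝ) / 2 + (δ / 2 - 1) = -s - 1 by rw [hs_def]; ring,
      show (1 - δ) / 2 = s - 1 by rw [hs_def]; ring]
  have hx_pow : x ^ (δ / 2 - 1) * x ^ s = √x := by
    rw [← rpow_add hx, sqrt_eq_rpow, hs_def]; ring_nf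
  have htwo_pow : (2 : ℝ) ^ (δ / 2) * 2 ^ s = 2 * √2 := by
    rw [← rpow_add two_pos, sqrt_eq_rpow, show δ / 2 + s = 1 + 1 / 2 by ring,
      rpow_add two_pos, rpow_one]
  have hexp : exp (x / 2) * exp (-(x / 2)) = 1 := by rw [← exp_add, add_neg_cancel, exp_zero]
  rw [setIntegral_congr_fun measurableSet_Ioo hintegrand,
    integral_Ioo_exp_neg_div_mul_rpow_mul_one_sub_rpow (by positivity) hs,
    show δ / 2 + s = 3 / 2 by ring, Gamma_three_div_two, div_rpow hx.le two_pos.le,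
    sqrt_mul two_pos.le, ← hx_pow,
    show (2 : ℝ) ^ s = 2 * √2 / 2 ^ (δ / 2) by rw [← htwo_pow]; field_simp]
  field_simp
  rw [hexp]

/-- **Explicit weight for the `Beta(δ/2, (3−δ)/2)` mixture:** for `δ ∈ (0,3)` and `x > 0`,
`(√x e^{x/2}/√(2π)) · (1/B(δ/2,(3−δ)/2)) · ∫_0^1 e^{−x/(2v)} v^{−3/2} v^{δ/2−1} (1−v)^{(1−δ)/2} dv
  = x^{δ/2−1}/(2^{δ/2} Γ(δ/2))`, where `B(α,β) = Γ(α)Γ(β)/Γ(α+β)`. -/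
theorem bessel_meander_weight (δ x : ℝ) (hδ0 : 0 < δ) (hδ3 : δ < 3) (hx : 0 < x) :
    (Real.sqrt x * Real.exp (x / 2) / Real.sqrt (2 * Real.pi)) *
        (1 / (Real.Gamma (δ / 2) * Real.Gamma ((3 - δ) / 2) /
          Real.Gamma (δ / 2 + (3 - δ) / 2))) *
        ∫ v in Set.Ioo (0 : ℝ) 1,
          Real.exp (-x / (2 * v)) * v ^ (-(3 : ℝ) / 2) * v ^ (δ / 2 - 1) *
            (1 - v) ^ ((1 - δ) / 2) =
      x ^ (δ / 2 - 1) / ((2 : ℝ) ^ (δ / 2) * Real.Gamma (δ / 2)) :=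
  bessel_meander_weight_general δ x hδ3 hx
end
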